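/- Let S be the semigroup generated by a finite set Σ of matrices in T^{n×n}, each with ρ(A) = 0, and suppose all generators have a common finite eigenvector u ∈ ℝ^n (A⊙u = u for all A ∈ Σ) lying in the intersection of their fundamental cells. Then every matrix P ∈ S is tropically non-singular, i.e., has tropical rank n. -/

import Mathlib

/-- The max-plus (tropical) semiring `T = ℝ ∪ {-∞}`. -/
abbrev T : Type := WithBot ℝ

/-- Tropical matrix product. -/
noncomputable def tmul {n m k : ℕ} (A : Fin n → Fin m → T) (B : Fin m → Fin k → T) :
    Fin n → Fin k → T :=
  fun i j => Finset.univ.sup fun l => A i l + B l j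

/-- Tropical matrix-vector product. -/
noncomputable def tmulVec {n m : ℕ} (A : Fin n → Fin m → T) (u : Fin m → T) : Fin n → T :=
  fun i => Finset.univ.sup fun j => A i j + u j

/-- Tropical identity matrix. -/
noncomputable def tId (n : ℕ) : Fin n → Fin n → T :=
  fun i j => if i = j then (0 : T) else ⊥

/-- Tropical matrix powers. -/
noncomputable def tpow {n : ℕ} (A : Fin n → Fin n → T) : ℕ → (Fin n → Fin n → T)
  | 0 => tId n
  | (m + 1) => tmul (tpow A m) A

/-- Tropical product of a list of matrices (empty product = identity). -/
noncomputable def tProd {n : ℕ} : List (Fin n → Fin n → T) → (Fin n → Fin n → T)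
  | [] => tId n
  | (M :: L) => tmul M (tProd L)

/-- Weight of a permutation. -/
noncomputable def wt {n : ℕ} (A : Fin n → Fin n → T) (σ : Equiv.Perm (Fin n)) : T :=
  ∑ i, A i (σ i)

/-- Tropical permanent. -/
noncomputable def per {n : ℕ} (A : Fin n → Fin n → T) : T :=
  Finset.univ.sup fun σ : Equiv.Perm (Fin n) => wt A σ

/-- Tropical non-singularity: finite permanent attained by a unique permutation. -/
def NonSingular {n : ℕ} (A : Fin n → Fin n → T) : Prop :=
  per A ≠ ⊥ ∧ ∃! σ : Equiv.Perm (Fin n), wt A σ = per A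

/-- Weight of the circuit `c 0 → c 1 → ⋯ → c ℓ → c 0` (length `ℓ+1`). -/
noncomputable def cwt {n ℓ : ℕ} (A : Fin n → Fin n → T) (c : Fin (ℓ + 1) → Fin n) : T :=
  ∑ k : Fin (ℓ + 1), A (c k) (c (k + 1))

/-- `ρ(A) = r`: some circuit has mean weight `r`, and every circuit has mean weight `≤ r`. -/
def RhoEq {n : ℕ} (A : Fin n → Fin n → T) (r : ℝ) : Prop :=
  (∃ ℓ, ∃ c : Fin (ℓ + 1) → Fin n, cwt A c = ((((ℓ : ℝ) + 1) * r : ℝ) : T)) ∧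
  ∀ ℓ, ∀ c : Fin (ℓ + 1) → Fin n, cwt A c ≤ ((((ℓ : ℝ) + 1) * r : ℝ) : T)

/-- `(i,j)` is an arc of the critical graph (lies on a circuit of mean weight `r = ρ(A)`). -/
def CritArc {n : ℕ} (A : Fin n → Fin n → T) (r : ℝ) (i j : Fin n) : Prop :=
  ∃ ℓ, ∃ c : Fin (ℓ + 1) → Fin n, cwt A c = ((((ℓ : ℝ) + 1) * r : ℝ) : T) ∧
    ∃ k : Fin (ℓ + 1), c k = i ∧ c (k + 1) = j

/-- `i` is a node of the critical graph. -/
def CritNode {n : ℕ} (A : Fin n → Fin n → T) (r : ℝ) (i : Fin n) : Prop :=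
  ∃ ℓ, ∃ c : Fin (ℓ + 1) → Fin n, cwt A c = ((((ℓ : ℝ) + 1) * r : ℝ) : T) ∧
    ∃ k : Fin (ℓ + 1), c k = i

/-- Reachability in the critical graph. -/
def CritReach {n : ℕ} (A : Fin n → Fin n → T) (r : ℝ) : Fin n → Fin n → Prop :=
  Relation.ReflTransGen (fun i j => CritArc A r i j)

/-- Same strongly connected component of the critical graph. -/
def SameScc {n : ℕ} (A : Fin n → Fin n → T) (r : ℝ) (i j : Fin n) : Prop :=
  CritReach A r i j ∧ CritReach A r j i

/-- `R` is a set of representatives, one per scc of the critical graph. -/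
def SccReps {n : ℕ} (A : Fin n → Fin n → T) (r : ℝ) (R : Finset (Fin n)) : Prop :=
  (∀ i ∈ R, CritNode A r i) ∧
  (∀ i ∈ R, ∀ j ∈ R, i ≠ j → ¬ SameScc A r i j) ∧
  (∀ j, CritNode A r j → ∃ i ∈ R, SameScc A r i j)

/-- Cyclicity of the scc of the critical graph containing `i`:
the gcd (greatest common divisor) of the lengths of the critical circuits through `i`. -/
noncomputable def cycAt {n : ℕ} (A : Fin n → Fin n → T) (r : ℝ) (i : Fin n) : ℕ :=
  sSup {d : ℕ | ∀ ℓ : ℕ,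
    (∃ c : Fin (ℓ + 1) → Fin n, cwt A c = ((((ℓ : ℝ) + 1) * r : ℝ) : T) ∧ c 0 = i) →
    d ∣ (ℓ + 1)}

/-- `A` has an `r × r` tropically non-singular submatrix. -/
def HasNSsub {n m : ℕ} (A : Fin n → Fin m → T) (r : ℕ) : Prop :=
  ∃ f : Fin r → Fin n, ∃ g : Fin r → Fin m,
    Function.Injective f ∧ Function.Injective g ∧
    NonSingular (fun i j => A (f i) (g j))

/-- Tropical rank: maximal size of a tropically non-singular square submatrix. -/
noncomputable def trrk {n m : ℕ} (A : Fin n → Fin m → T) : ℕ :=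
  sSup {r : ℕ | HasNSsub A r}

/-- Tropical convex hull (span) of a finite family of vectors of `T^n`. -/
def tSpan {n m : ℕ} (v : Fin m → (Fin n → T)) : Set (Fin n → T) :=
  { w | ∃ α : Fin m → T, w = fun i => Finset.univ.sup fun j => α j + v j i }

/-- Weak dimension of a tropically convex set: minimal size of a generating family. -/
noncomputable def weakDim {n : ℕ} (X : Set (Fin n → T)) : ℕ :=
  sInf {k : ℕ | ∃ v : Fin k → (Fin n → T), tSpan v = X}

/-- Column rank: weak dimension of the tropical convex hull of the columns. -/
noncomputable def colrk {n m : ℕ} (A : Fin n → Fin m → T) : ℕ :=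
  weakDim (tSpan fun j => fun i => A i j)

/-- Row rank: weak dimension of the tropical convex hull of the rows. -/
noncomputable def rowrk {n m : ℕ} (A : Fin n → Fin m → T) : ℕ :=
  weakDim (tSpan fun i => fun j => A i j)

/-!
Rescaling a matrix by the common eigenvector `u` (entries `A i j - u i + u j`) turns every
generator into a matrix whose entries are `≤ 0`, with zeros exactly on the graph of a single
permutation: `u` is fixed by the generator and lies in its fundamental cell. This shape is
preserved by tropical products, the permutations composing, and a matrix of this shape has a
unique optimal permutation, of weight `0`, so it is non-singular and of full tropical rank.
-/

open Finset

namespace WithBot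

variable {α : Type*} [AddCommMonoid α] [PartialOrder α] [IsOrderedCancelAddMonoid α]

lemma add_lt_coe_add_of_lt_of_le {x y : WithBot α} {a b : α} (hx : x < a) (hy : y ≤ b) :
    x + y < ((a + b : α) : WithBot α) := by
  rw [coe_add]
  exact (add_le_add le_rfl hy).trans_lt (WithBot.add_lt_add_right coe_ne_bot hx)

lemma add_lt_coe_add_of_le_of_lt {x y : WithBot α} {a b : α} (hx : x ≤ a) (hy : y < b) :
    x + y < ((a + b : α) : WithBot α) := by
  rw [add_comm x, add_comm a]
  exact add_lt_coe_add_of_lt_of_le hy hx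

lemma sum_lt_coe_sum {ι : Type*} {s : Finset ι} {f : ι → WithBot α} {g : ι → α}
    (hle : ∀ i ∈ s, f i ≤ g i) {i₀ : ι} (hi₀ : i₀ ∈ s) (hlt : f i₀ < g i₀) :
    ∑ i ∈ s, f i < ((∑ i ∈ s, g i : α) : WithBot α) := by
  classical
  rw [← add_sum_erase s f hi₀, ← add_sum_erase s g hi₀]
  refine add_lt_coe_add_of_lt_of_le hlt ?_
  rw [coe_sum]
  exact sum_le_sum fun i hi => hle i (mem_of_mem_erase hi)

section Group

variable {α : Type*} [AddCommGroup α]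

lemma lt_coe_sub_iff [PartialOrder α] [IsOrderedAddMonoid α] {x : WithBot α} {a b : α} :
    x < ((a - b : α) : WithBot α) ↔ x + b < a := by
  rw [← WithBot.add_lt_add_iff_right (coe_ne_bot (a := b)), ← coe_add, sub_add_cancel]

lemma eq_coe_sub_iff {x : WithBot α} {a b : α} : x = ((a - b : α) : WithBot α) ↔ x + b = a := by
  induction x using WithBot.recBotCoe with
  | bot => simp
  | coe r => norm_cast; exact eq_sub_iff_add_eq

lemma coe_sub_add_coe_sub (a b c : α) :
    ((a - b : α) : WithBot α) + ((b - c : α) : WithBot α) = ((a - c : α) : WithBot α) := by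
  rw [← coe_add, sub_add_sub_cancel]

end Group

end WithBot

lemma exists_wt_eq_per {n : ℕ} (A : Fin n → Fin n → T) : ∃ τ, wt A τ = per A := by
  obtain ⟨τ, -, hτ⟩ := exists_mem_eq_sup univ univ_nonempty (wt A)
  exact ⟨τ, hτ.symm⟩

lemma nonSingular_of_wt_lt {n : ℕ} {A : Fin n → Fin n → T} {τ : Equiv.Perm (Fin n)}
    (hτ : wt A τ ≠ ⊥) (hlt : ∀ σ, σ ≠ τ → wt A σ < wt A τ) : NonSingular A := by
  have hper : per A = wt A τ :=
    le_antisymm (Finset.sup_le fun σ _ => by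
      rcases eq_or_ne σ τ with rfl | hσ
      exacts [le_rfl, (hlt σ hσ).le]) (le_sup (f := wt A) (mem_univ τ))
  refine ⟨hper ▸ hτ, τ, hper.symm, fun σ hσ => ?_⟩
  by_contra hne
  exact (hlt σ hne).ne (hσ.trans hper)

lemma trrk_eq_of_nonSingular {n : ℕ} {A : Fin n → Fin n → T} (hA : NonSingular A) :
    trrk A = n := by
  have hn : HasNSsub A n := ⟨id, id, Function.injective_id, Function.injective_id, hA⟩
  have hbdd : ∀ r ∈ {r | HasNSsub A r}, r ≤ n := by
    rintro r ⟨f, -, hf, -, -⟩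
    simpa using Fintype.card_le_of_injective f hf
  exact le_antisymm (csSup_le ⟨n, hn⟩ hbdd) (le_csSup ⟨n, hbdd⟩ hn)

/-- The rescaled matrix `A i j - u i + u j` is `0` on the graph of `τ` and negative elsewhere. -/
structure IsStrictVisualization {n : ℕ} (u : Fin n → ℝ) (A : Fin n → Fin n → T)
    (τ : Equiv.Perm (Fin n)) : Prop where
  apply_perm : ∀ i, A i (τ i) = ((u i - u (τ i) : ℝ) : T)
  apply_lt : ∀ i j, j ≠ τ i → A i j < ((u i - u j : ℝ) : T)

namespace IsStrictVisualization

variable {n : ℕ} {u : Fin n → ℝ} {A B : Fin n → Fin n → T} {σ τ : Equiv.Perm (Fin n)}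

lemma apply_le (h : IsStrictVisualization u A τ) (i j : Fin n) :
    A i j ≤ ((u i - u j : ℝ) : T) := by
  rcases eq_or_ne j (τ i) with rfl | hj
  exacts [(h.apply_perm i).le, (h.apply_lt i j hj).le]

lemma of_tmulVec_eq (heig : ∀ i, tmulVec A (fun j => ((u j : ℝ) : T)) i = ((u i : ℝ) : T))
    (hcell : ∀ i j, j ≠ τ i → A i j + ((u j : ℝ) : T) < A i (τ i) + ((u (τ i) : ℝ) : T)) :
    IsStrictVisualization u A τ := by
  have hmax : ∀ i, A i (τ i) + ((u (τ i) : ℝ) : T) = ((u i : ℝ) : T) := fun i => by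
    rw [← heig i]
    refine le_antisymm (le_sup (f := fun j => A i j + ((u j : ℝ) : T)) (mem_univ _))
      (Finset.sup_le fun j _ => ?_)
    rcases eq_or_ne j (τ i) with rfl | hj
    exacts [le_rfl, (hcell i j hj).le]
  refine ⟨fun i => WithBot.eq_coe_sub_iff.2 (hmax i), fun i j hj => WithBot.lt_coe_sub_iff.2 ?_⟩
  exact (hcell i j hj).trans_eq (hmax i)

lemma tId (u : Fin n → ℝ) : IsStrictVisualization u (tId n) 1 where
  apply_perm i := by simp [_root_.tId]
  apply_lt i j hj := by
    rw [Equiv.Perm.one_apply] at hj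
    rw [_root_.tId, if_neg hj.symm]
    exact WithBot.bot_lt_coe _

lemma tmul (hA : IsStrictVisualization u A σ) (hB : IsStrictVisualization u B τ) :
    IsStrictVisualization u (_root_.tmul A B) (σ.trans τ) where
  apply_perm i := by
    refine le_antisymm (Finset.sup_le fun l _ => ?_) ?_
    · exact (add_le_add (hA.apply_le i l) (hB.apply_le l _)).trans_eq (WithBot.coe_sub_add_coe_sub _ _ _)
    · calc ((u i - u (τ (σ i)) : ℝ) : T) = A i (σ i) + B (σ i) (τ (σ i)) := by
            rw [hA.apply_perm, hB.apply_perm, WithBot.coe_sub_add_coe_sub]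
        _ ≤ _ := le_sup (f := fun l => A i l + B l (τ (σ i))) (mem_univ _)
  apply_lt i j hj := by
    refine (Finset.sup_lt_iff (WithBot.bot_lt_coe _)).2 fun l _ => ?_
    rw [← sub_add_sub_cancel (u i) (u l) (u j)]
    rcases eq_or_ne l (σ i) with rfl | hl
    · exact WithBot.add_lt_coe_add_of_le_of_lt (hA.apply_le i _) (hB.apply_lt _ j hj)
    · exact WithBot.add_lt_coe_add_of_lt_of_le (hA.apply_lt i l hl) (hB.apply_le l j)

lemma exists_tProd {L : List (Fin n → Fin n → T)}
    (hL : ∀ M ∈ L, ∃ τ, IsStrictVisualization u M τ) :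
    ∃ τ, IsStrictVisualization u (tProd L) τ := by
  induction L with
  | nil => exact ⟨1, tId u⟩
  | cons M L ih =>
    obtain ⟨σ, hσ⟩ := hL M List.mem_cons_self
    obtain ⟨τ, hτ⟩ := ih fun N hN => hL N (List.mem_cons_of_mem M hN)
    exact ⟨σ.trans τ, hσ.tmul hτ⟩

lemma wt_perm (h : IsStrictVisualization u A τ) : wt A τ = 0 := by
  rw [wt, sum_congr rfl fun i _ => h.apply_perm i, ← WithBot.coe_sum, sum_sub_distrib,
    Equiv.sum_comp, sub_self, WithBot.coe_zero]

lemma wt_lt (h : IsStrictVisualization u A τ) (hσ : σ ≠ τ) : wt A σ < 0 := by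
  obtain ⟨i, hi⟩ : ∃ i, σ i ≠ τ i := by
    by_contra! hall
    exact hσ (Equiv.ext hall)
  have := WithBot.sum_lt_coe_sum (fun i _ => h.apply_le i (σ i)) (mem_univ i) (h.apply_lt i _ hi)
  rwa [sum_sub_distrib, Equiv.sum_comp, sub_self, WithBot.coe_zero] at this

lemma nonSingular (h : IsStrictVisualization u A τ) : NonSingular A :=
  nonSingular_of_wt_lt (h.wt_perm ▸ WithBot.coe_ne_bot) fun _ hσ => h.wt_perm ▸ h.wt_lt hσ

end IsStrictVisualization

theorem stmt17_general {n : ℕ} (Gen : Set (Fin n → Fin n → T))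
    (u : Fin n → ℝ)
    (heig : ∀ A ∈ Gen, ∀ i, tmulVec A (fun j => ((u j : ℝ) : T)) i = ((u i : ℝ) : T))
    (hcell : ∀ A ∈ Gen, ∀ τ : Equiv.Perm (Fin n), wt A τ = per A →
      ∀ i : Fin n, ∀ j : Fin n, j ≠ τ i →
        A i j + ((u j : ℝ) : T) < A i (τ i) + ((u (τ i) : ℝ) : T)) :
    ∀ L : List (Fin n → Fin n → T), L ≠ [] → (∀ M ∈ L, M ∈ Gen) →
      NonSingular (tProd L) ∧ trrk (tProd L) = n := by
  intro L _ hL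
  have hgen : ∀ A ∈ Gen, ∃ τ, IsStrictVisualization u A τ := fun A hA => by
    obtain ⟨τ, hτ⟩ := exists_wt_eq_per A
    exact ⟨τ, .of_tmulVec_eq (heig A hA) (hcell A hA τ hτ)⟩
  obtain ⟨τ, hτ⟩ := IsStrictVisualization.exists_tProd fun M hM => hgen M (hL M hM)
  exact ⟨hτ.nonSingular, trrk_eq_of_nonSingular hτ.nonSingular⟩

/-- If all generators have `ρ = 0`, are non-singular, and share a common
finite eigenvector `u` lying in all their fundamental cells, then every product of
generators is tropically non-singular, i.e. has tropical rank `n`. -/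
theorem stmt17 {n : ℕ} (Gen : Set (Fin n → Fin n → T)) (hfin : Gen.Finite)
    (hrho : ∀ A ∈ Gen, RhoEq A 0)
    (hns : ∀ A ∈ Gen, NonSingular A)
    (u : Fin n → ℝ)
    (heig : ∀ A ∈ Gen, ∀ i, tmulVec A (fun j => ((u j : ℝ) : T)) i = ((u i : ℝ) : T))
    (hcell : ∀ A ∈ Gen, ∀ τ : Equiv.Perm (Fin n), wt A τ = per A →
      ∀ i : Fin n, ∀ j : Fin n, j ≠ τ i →
        A i j + ((u j : ℝ) : T) < A i (τ i) + ((u (τ i) : ℝ) : T)) :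
    ∀ L : List (Fin n → Fin n → T), L ≠ [] → (∀ M ∈ L, M ∈ Gen) →
      NonSingular (tProd L) ∧ trrk (tProd L) = n :=
  stmt17_general Gen u heig hcell
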